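/- Fix l_B > 0, integers k₁, k₂, k₃, and let G = U(1)⋉𝔼². With representatives z ∈ [0,1) and θ ∈ [0,2π), set A(g₁,g₂) = (r₁ × R_{θ₁} r₂)/(2 l_B²), c₁(g₁,g₂) = z₁ + z₂ + A(g₁,g₂) − z₁₂, c₂(g₁,g₂) = (θ₁ + θ₂ − θ₁₂)/(2π), and suppose λ : G³ → ℝ satisfies (dλ)(g₁,g₂,g₃,g₄) = A(g₁,g₂)·A(g₃,g₄) for all g_i ∈ G. Define the 3-cochain f(g₁,g₂,g₃) = k₁·(z₁ c₁(g₂,g₃) + A(g₁,g₂) z₃ + λ(g₁,g₂,g₃)) + k₂·(θ₁/2π)·c₁(g₂,g₃) + k₃·(θ₁/2π)·c₂(g₂,g₃). Then (df)(g₁,g₂,g₃,g₄) = k₁ c₁(g₁,g₂) c₁(g₃,g₄) + k₂ c₂(g₁,g₂) c₁(g₃,g₄) + k₃ c₂(g₁,g₂) c₂(g₃,g₄), which is an integer; consequently f reduced modulo 1 is an (ℝ/ℤ)-valued 3-cocycle on U(1)⋉𝔼². -/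

import Mathlib

noncomputable section

/-- The cross product of plane vectors. -/
def crossR (r r' : Fin 2 → ℝ) : ℝ := r 0 * r' 1 - r 1 * r' 0

/-- Rotation of the plane by the angle `θ`. -/
def rotAngle (θ : Real.Angle) (r : Fin 2 → ℝ) : Fin 2 → ℝ :=
  ![θ.cos * r 0 - θ.sin * r 1, θ.sin * r 0 + θ.cos * r 1]

/-- The underlying set of the continuum magnetic Euclidean group `U(1)⋉𝔼²`. -/
abbrev MagEuc : Type := AddCircle (1 : ℝ) × (Fin 2 → ℝ) × Real.Angle

/-- The continuum magnetic Euclidean group multiplication. -/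
def magEucMul (lB : ℝ) (g₁ g₂ : MagEuc) : MagEuc :=
  (g₁.1 + g₂.1 +
      (↑((crossR g₁.2.1 (rotAngle g₁.2.2 g₂.2.1) / (2 * lB ^ 2) : ℝ)) : AddCircle (1 : ℝ)),
    g₁.2.1 + rotAngle g₁.2.2 g₂.2.1,
    g₁.2.2 + g₂.2.2)

/-- The representative in `[0,1)` of an element of `ℝ/ℤ`. -/
def rep1 (z : AddCircle (1 : ℝ)) : ℝ :=
  haveI : Fact ((0 : ℝ) < 1) := ⟨one_pos⟩
  (AddCircle.equivIco 1 0 z : ℝ)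

/-- The representative in `[0,2π)` of an angle. -/
def repAngle (θ : Real.Angle) : ℝ :=
  if θ.toReal < 0 then θ.toReal + 2 * Real.pi else θ.toReal

/-- The magnetic area 2-cochain `A(g₁,g₂) = (r₁ × R_{θ₁} r₂)/(2 l_B²)`. -/
def areaC (lB : ℝ) (g₁ g₂ : MagEuc) : ℝ :=
  crossR g₁.2.1 (rotAngle g₁.2.2 g₂.2.1) / (2 * lB ^ 2)

/-- The charge cocycle `c₁(g₁,g₂) = z₁ + z₂ + A(g₁,g₂) − z₁₂`. -/
def cOne (lB : ℝ) (g₁ g₂ : MagEuc) : ℝ :=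
  rep1 g₁.1 + rep1 g₂.1 + areaC lB g₁ g₂ - rep1 (magEucMul lB g₁ g₂).1

/-- The rotation cocycle `c₂(g₁,g₂) = (θ₁ + θ₂ − θ₁₂)/(2π)`. -/
def cTwo (lB : ℝ) (g₁ g₂ : MagEuc) : ℝ :=
  (repAngle g₁.2.2 + repAngle g₂.2.2 - repAngle (magEucMul lB g₁ g₂).2.2) / (2 * Real.pi)

/-- The SPT 3-cochain with levels `k₁` (IQH), `k₂` (shift) and `k₃` (rotation). -/
def sptEuc (lB : ℝ) (k₁ k₂ k₃ : ℤ) (lam : MagEuc → MagEuc → MagEuc → ℝ)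
    (g₁ g₂ g₃ : MagEuc) : ℝ :=
  (k₁ : ℝ) * (rep1 g₁.1 * cOne lB g₂ g₃ + areaC lB g₁ g₂ * rep1 g₃.1 + lam g₁ g₂ g₃) +
    (k₂ : ℝ) * (repAngle g₁.2.2 / (2 * Real.pi)) * cOne lB g₂ g₃ +
    (k₃ : ℝ) * (repAngle g₁.2.2 / (2 * Real.pi)) * cTwo lB g₂ g₃

/-!
Write `z(g) ∈ [0,1)` and `ϑ(g) = θ/2π ∈ [0,1)` for the chosen representatives. Then
`c₁ = dz + A` and `c₂ = dϑ`, and both are cocycles: `A` is one because the cross product is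
rotation invariant. In cup-product notation the cochain is
`f = k₁ (z ∪ c₁ + A ∪ z + λ) + k₂ ϑ ∪ c₁ + k₃ ϑ ∪ c₂`, and the Leibniz rule
`d(a ∪ c) = da ∪ c − a ∪ dc`, `d(c ∪ a) = dc ∪ a + c ∪ da` gives
`df = k₁ ((c₁ − A) ∪ c₁ + A ∪ (c₁ − A) + A ∪ A) + k₂ c₂ ∪ c₁ + k₃ c₂ ∪ c₂`.
Because `z` and `ϑ` represent the components of `g`, both `c₁` and `c₂` are integers,
so `df` is integral and `f` is a cocycle modulo `1`.
-/

namespace Cochain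

variable {G : Type*} (mul : G → G → G)

def coboundary₁ (a : G → ℝ) (g₁ g₂ : G) : ℝ :=
  a g₂ - a (mul g₁ g₂) + a g₁

def coboundary₂ (c : G → G → ℝ) (g₁ g₂ g₃ : G) : ℝ :=
  c g₂ g₃ - c (mul g₁ g₂) g₃ + c g₁ (mul g₂ g₃) - c g₁ g₂

def coboundary₃ (f : G → G → G → ℝ) (g₁ g₂ g₃ g₄ : G) : ℝ :=
  f g₂ g₃ g₄ - f (mul g₁ g₂) g₃ g₄ + f g₁ (mul g₂ g₃) g₄ - f g₁ g₂ (mul g₃ g₄) + f g₁ g₂ g₃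

def cup₁₂ (a : G → ℝ) (c : G → G → ℝ) (g₁ g₂ g₃ : G) : ℝ := a g₁ * c g₂ g₃

def cup₂₁ (c : G → G → ℝ) (a : G → ℝ) (g₁ g₂ g₃ : G) : ℝ := c g₁ g₂ * a g₃

theorem coboundary₂_coboundary₁ (assoc : ∀ g₁ g₂ g₃, mul (mul g₁ g₂) g₃ = mul g₁ (mul g₂ g₃))
    (a : G → ℝ) (g₁ g₂ g₃ : G) : coboundary₂ mul (coboundary₁ mul a) g₁ g₂ g₃ = 0 := by
  simp only [coboundary₂, coboundary₁, assoc]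
  ring

theorem coboundary₃_cup₁₂ (a : G → ℝ) (c : G → G → ℝ) (g₁ g₂ g₃ g₄ : G) :
    coboundary₃ mul (cup₁₂ a c) g₁ g₂ g₃ g₄ =
      coboundary₁ mul a g₁ g₂ * c g₃ g₄ - a g₁ * coboundary₂ mul c g₂ g₃ g₄ := by
  simp only [coboundary₃, coboundary₂, coboundary₁, cup₁₂]
  ring

theorem coboundary₃_cup₂₁ (c : G → G → ℝ) (a : G → ℝ) (g₁ g₂ g₃ g₄ : G) :
    coboundary₃ mul (cup₂₁ c a) g₁ g₂ g₃ g₄ =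
      coboundary₂ mul c g₁ g₂ g₃ * a g₄ + c g₁ g₂ * coboundary₁ mul a g₃ g₄ := by
  simp only [coboundary₃, coboundary₂, coboundary₁, cup₂₁]
  ring

variable {mul} in
theorem coe_coboundary₃_eq_zero {f : G → G → G → ℝ} {g₁ g₂ g₃ g₄ : G}
    (h : ∃ N : ℤ, coboundary₃ mul f g₁ g₂ g₃ g₄ = N) :
    (f g₂ g₃ g₄ : AddCircle (1 : ℝ)) - ↑(f (mul g₁ g₂) g₃ g₄) + ↑(f g₁ (mul g₂ g₃) g₄) -
      ↑(f g₁ g₂ (mul g₃ g₄)) + ↑(f g₁ g₂ g₃) = 0 := by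
  obtain ⟨N, hN⟩ := h
  have hzero : ((coboundary₃ mul f g₁ g₂ g₃ g₄ : ℝ) : AddCircle (1 : ℝ)) = 0 :=
    (AddCircle.coe_eq_zero_iff _).mpr ⟨N, by simp [hN]⟩
  simpa only [coboundary₃, AddCircle.coe_add, AddCircle.coe_sub] using hzero

end Cochain

open Cochain

theorem coe_rep1 (z : AddCircle (1 : ℝ)) : ((rep1 z : ℝ) : AddCircle (1 : ℝ)) = z :=
  haveI : Fact ((0 : ℝ) < 1) := ⟨one_pos⟩
  (AddCircle.equivIco 1 0).symm_apply_apply z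

theorem coe_repAngle (θ : Real.Angle) : ((repAngle θ : ℝ) : Real.Angle) = θ := by
  unfold repAngle
  split_ifs
  · rw [Real.Angle.coe_add, Real.Angle.coe_two_pi, add_zero, θ.coe_toReal]
  · exact θ.coe_toReal

theorem rotAngle_add (θ : Real.Angle) (r r' : Fin 2 → ℝ) :
    rotAngle θ (r + r') = rotAngle θ r + rotAngle θ r' := by
  funext i
  fin_cases i <;> simp [rotAngle] <;> ring

theorem rotAngle_rotAngle (θ₁ θ₂ : Real.Angle) (r : Fin 2 → ℝ) :
    rotAngle θ₁ (rotAngle θ₂ r) = rotAngle (θ₁ + θ₂) r := by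
  funext i
  fin_cases i <;> simp [rotAngle, Real.Angle.cos_add, Real.Angle.sin_add] <;> ring

theorem crossR_rotAngle_rotAngle (θ : Real.Angle) (r r' : Fin 2 → ℝ) :
    crossR (rotAngle θ r) (rotAngle θ r') = crossR r r' := by
  simp only [crossR, rotAngle, Matrix.cons_val_zero, Matrix.cons_val_one]
  linear_combination (r 0 * r' 1 - r 1 * r' 0) * θ.cos_sq_add_sin_sq

theorem crossR_add_left (r r' s : Fin 2 → ℝ) : crossR (r + r') s = crossR r s + crossR r' s := by
  simp only [crossR, Pi.add_apply]
  ring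

theorem crossR_add_right (r s s' : Fin 2 → ℝ) : crossR r (s + s') = crossR r s + crossR r s' := by
  simp only [crossR, Pi.add_apply]
  ring

section MagEuc

variable (lB : ℝ)

theorem magEucMul_fst (g₁ g₂ : MagEuc) :
    (magEucMul lB g₁ g₂).1 = g₁.1 + g₂.1 + (areaC lB g₁ g₂ : AddCircle (1 : ℝ)) := rfl

theorem magEucMul_pos (g₁ g₂ : MagEuc) :
    (magEucMul lB g₁ g₂).2.1 = g₁.2.1 + rotAngle g₁.2.2 g₂.2.1 := rfl

theorem magEucMul_angle (g₁ g₂ : MagEuc) : (magEucMul lB g₁ g₂).2.2 = g₁.2.2 + g₂.2.2 := rfl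

theorem coboundary₂_areaC (g₁ g₂ g₃ : MagEuc) :
    coboundary₂ (magEucMul lB) (areaC lB) g₁ g₂ g₃ = 0 := by
  simp only [coboundary₂, areaC, magEucMul_pos, magEucMul_angle, ← rotAngle_rotAngle,
    rotAngle_add, crossR_add_left, crossR_add_right, crossR_rotAngle_rotAngle]
  ring

theorem magEucMul_assoc (g₁ g₂ g₃ : MagEuc) :
    magEucMul lB (magEucMul lB g₁ g₂) g₃ = magEucMul lB g₁ (magEucMul lB g₂ g₃) := by
  have hA : (areaC lB g₁ g₂ : AddCircle (1 : ℝ)) + ↑(areaC lB (magEucMul lB g₁ g₂) g₃) =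
      ↑(areaC lB g₂ g₃) + ↑(areaC lB g₁ (magEucMul lB g₂ g₃)) := by
    rw [← AddCircle.coe_add, ← AddCircle.coe_add]
    have h := coboundary₂_areaC lB g₁ g₂ g₃
    rw [coboundary₂] at h
    congr 1
    linear_combination -h
  refine Prod.ext ?_ (Prod.ext ?_ ?_)
  · simp only [magEucMul_fst]
    calc _ = g₁.1 + g₂.1 + g₃.1 + ((areaC lB g₁ g₂ : AddCircle (1 : ℝ)) +
            ↑(areaC lB (magEucMul lB g₁ g₂) g₃)) := by abel
      _ = _ := by rw [hA]; abel
  · simp only [magEucMul_pos, magEucMul_angle, rotAngle_add, rotAngle_rotAngle, add_assoc]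
  · simp only [magEucMul_angle, add_assoc]

def chargeRep (g : MagEuc) : ℝ := rep1 g.1

def turnsRep (g : MagEuc) : ℝ := repAngle g.2.2 / (2 * Real.pi)

theorem coboundary₁_chargeRep (g₁ g₂ : MagEuc) :
    coboundary₁ (magEucMul lB) chargeRep g₁ g₂ = cOne lB g₁ g₂ - areaC lB g₁ g₂ := by
  simp only [coboundary₁, chargeRep, cOne]
  ring

theorem coboundary₁_turnsRep : coboundary₁ (magEucMul lB) turnsRep = cTwo lB := by
  funext g₁ g₂
  simp only [coboundary₁, turnsRep, cTwo]
  ring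

theorem coboundary₂_cOne (g₁ g₂ g₃ : MagEuc) :
    coboundary₂ (magEucMul lB) (cOne lB) g₁ g₂ g₃ = 0 := by
  have hz := coboundary₂_coboundary₁ _ (magEucMul_assoc lB) chargeRep g₁ g₂ g₃
  have hA := coboundary₂_areaC lB g₁ g₂ g₃
  simp only [coboundary₂, coboundary₁_chargeRep] at hz hA ⊢
  linear_combination hz + hA

theorem coboundary₂_cTwo (g₁ g₂ g₃ : MagEuc) :
    coboundary₂ (magEucMul lB) (cTwo lB) g₁ g₂ g₃ = 0 := by
  rw [← coboundary₁_turnsRep]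
  exact coboundary₂_coboundary₁ _ (magEucMul_assoc lB) turnsRep g₁ g₂ g₃

theorem exists_cOne_eq_intCast (g₁ g₂ : MagEuc) : ∃ n : ℤ, cOne lB g₁ g₂ = n := by
  have hzero : ((cOne lB g₁ g₂ : ℝ) : AddCircle (1 : ℝ)) = 0 := by
    simp only [cOne, AddCircle.coe_add, AddCircle.coe_sub, coe_rep1, magEucMul_fst]
    abel
  obtain ⟨n, hn⟩ := (AddCircle.coe_eq_zero_iff _).mp hzero
  exact ⟨n, by simp [← hn]⟩

theorem exists_cTwo_eq_intCast (g₁ g₂ : MagEuc) : ∃ n : ℤ, cTwo lB g₁ g₂ = n := by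
  have hsum : ((repAngle g₁.2.2 + repAngle g₂.2.2 : ℝ) : Real.Angle) =
      ↑(repAngle (magEucMul lB g₁ g₂).2.2) := by
    rw [Real.Angle.coe_add, coe_repAngle, coe_repAngle, coe_repAngle, magEucMul_angle]
  obtain ⟨n, hn⟩ := Real.Angle.angle_eq_iff_two_pi_dvd_sub.mp hsum
  refine ⟨n, ?_⟩
  rw [cTwo, hn]
  field_simp

theorem coboundary₃_sptEuc (k₁ k₂ k₃ : ℤ) {lam : MagEuc → MagEuc → MagEuc → ℝ}
    (hlam : ∀ g₁ g₂ g₃ g₄ : MagEuc,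
      coboundary₃ (magEucMul lB) lam g₁ g₂ g₃ g₄ = areaC lB g₁ g₂ * areaC lB g₃ g₄)
    (g₁ g₂ g₃ g₄ : MagEuc) :
    coboundary₃ (magEucMul lB) (sptEuc lB k₁ k₂ k₃ lam) g₁ g₂ g₃ g₄ =
      (k₁ : ℝ) * cOne lB g₁ g₂ * cOne lB g₃ g₄ + (k₂ : ℝ) * cTwo lB g₁ g₂ * cOne lB g₃ g₄ +
        (k₃ : ℝ) * cTwo lB g₁ g₂ * cTwo lB g₃ g₄ := by
  have hz := coboundary₃_cup₁₂ (magEucMul lB) chargeRep (cOne lB) g₁ g₂ g₃ g₄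
  have hA := coboundary₃_cup₂₁ (magEucMul lB) (areaC lB) chargeRep g₁ g₂ g₃ g₄
  have hϑ₁ := coboundary₃_cup₁₂ (magEucMul lB) turnsRep (cOne lB) g₁ g₂ g₃ g₄
  have hϑ₂ := coboundary₃_cup₁₂ (magEucMul lB) turnsRep (cTwo lB) g₁ g₂ g₃ g₄
  have hdlam := hlam g₁ g₂ g₃ g₄
  simp only [coboundary₂_cOne, coboundary₂_cTwo, coboundary₂_areaC, coboundary₁_chargeRep,
    coboundary₁_turnsRep, coboundary₃, cup₁₂, cup₂₁, chargeRep, turnsRep, sptEuc]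
    at hz hA hϑ₁ hϑ₂ hdlam ⊢
  linear_combination (k₁ : ℝ) * (hz + hA + hdlam) + (k₂ : ℝ) * hϑ₁ + (k₃ : ℝ) * hϑ₂

end MagEuc

theorem continuum_spt_cocycles_general (lB : ℝ) (k₁ k₂ k₃ : ℤ)
    (lam : MagEuc → MagEuc → MagEuc → ℝ)
    (hlam : ∀ g₁ g₂ g₃ g₄ : MagEuc,
      lam g₂ g₃ g₄ - lam (magEucMul lB g₁ g₂) g₃ g₄ + lam g₁ (magEucMul lB g₂ g₃) g₄ -
          lam g₁ g₂ (magEucMul lB g₃ g₄) + lam g₁ g₂ g₃ = areaC lB g₁ g₂ * areaC lB g₃ g₄) :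
    (∀ g₁ g₂ g₃ g₄ : MagEuc,
      sptEuc lB k₁ k₂ k₃ lam g₂ g₃ g₄ - sptEuc lB k₁ k₂ k₃ lam (magEucMul lB g₁ g₂) g₃ g₄ +
          sptEuc lB k₁ k₂ k₃ lam g₁ (magEucMul lB g₂ g₃) g₄ -
          sptEuc lB k₁ k₂ k₃ lam g₁ g₂ (magEucMul lB g₃ g₄) +
          sptEuc lB k₁ k₂ k₃ lam g₁ g₂ g₃ =
        (k₁ : ℝ) * cOne lB g₁ g₂ * cOne lB g₃ g₄ + (k₂ : ℝ) * cTwo lB g₁ g₂ * cOne lB g₃ g₄ +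
          (k₃ : ℝ) * cTwo lB g₁ g₂ * cTwo lB g₃ g₄) ∧
    (∀ g₁ g₂ g₃ g₄ : MagEuc, ∃ N : ℤ,
      (k₁ : ℝ) * cOne lB g₁ g₂ * cOne lB g₃ g₄ + (k₂ : ℝ) * cTwo lB g₁ g₂ * cOne lB g₃ g₄ +
        (k₃ : ℝ) * cTwo lB g₁ g₂ * cTwo lB g₃ g₄ = N) ∧
    (∀ g₁ g₂ g₃ g₄ : MagEuc,
      (↑(sptEuc lB k₁ k₂ k₃ lam g₂ g₃ g₄) : AddCircle (1 : ℝ)) -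
          ↑(sptEuc lB k₁ k₂ k₃ lam (magEucMul lB g₁ g₂) g₃ g₄) +
          ↑(sptEuc lB k₁ k₂ k₃ lam g₁ (magEucMul lB g₂ g₃) g₄) -
          ↑(sptEuc lB k₁ k₂ k₃ lam g₁ g₂ (magEucMul lB g₃ g₄)) +
          ↑(sptEuc lB k₁ k₂ k₃ lam g₁ g₂ g₃) = 0) := by
  have hd := coboundary₃_sptEuc lB k₁ k₂ k₃ hlam
  have hint : ∀ g₁ g₂ g₃ g₄ : MagEuc, ∃ N : ℤ,
      (k₁ : ℝ) * cOne lB g₁ g₂ * cOne lB g₃ g₄ + (k₂ : ℝ) * cTwo lB g₁ g₂ * cOne lB g₃ g₄ +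
        (k₃ : ℝ) * cTwo lB g₁ g₂ * cTwo lB g₃ g₄ = N := by
    intro g₁ g₂ g₃ g₄
    obtain ⟨n₁, hn₁⟩ := exists_cOne_eq_intCast lB g₁ g₂
    obtain ⟨n₂, hn₂⟩ := exists_cTwo_eq_intCast lB g₁ g₂
    obtain ⟨m₁, hm₁⟩ := exists_cOne_eq_intCast lB g₃ g₄
    obtain ⟨m₂, hm₂⟩ := exists_cTwo_eq_intCast lB g₃ g₄
    exact ⟨k₁ * n₁ * m₁ + k₂ * n₂ * m₁ + k₃ * n₂ * m₂, by rw [hn₁, hn₂, hm₁, hm₂]; push_cast; ring⟩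
  refine ⟨hd, hint, fun g₁ g₂ g₃ g₄ => coe_coboundary₃_eq_zero ?_⟩
  rw [hd]
  exact hint g₁ g₂ g₃ g₄

/-- The coboundary of the continuum SPT 3-cochain is the integral 4-cocycle
`k₁ c₁c₁ + k₂ c₂c₁ + k₃ c₂c₂`; hence the cochain reduced mod 1 is an `(ℝ/ℤ)`-valued
3-cocycle on `U(1)⋉𝔼²`, realizing the `ℤ³` SPT classification. -/
theorem continuum_spt_cocycles (lB : ℝ) (hlB : 0 < lB) (k₁ k₂ k₃ : ℤ)
    (lam : MagEuc → MagEuc → MagEuc → ℝ)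
    (hlam : ∀ g₁ g₂ g₃ g₄ : MagEuc,
      lam g₂ g₃ g₄ - lam (magEucMul lB g₁ g₂) g₃ g₄ + lam g₁ (magEucMul lB g₂ g₃) g₄ -
          lam g₁ g₂ (magEucMul lB g₃ g₄) + lam g₁ g₂ g₃ = areaC lB g₁ g₂ * areaC lB g₃ g₄) :
    (∀ g₁ g₂ g₃ g₄ : MagEuc,
      sptEuc lB k₁ k₂ k₃ lam g₂ g₃ g₄ - sptEuc lB k₁ k₂ k₃ lam (magEucMul lB g₁ g₂) g₃ g₄ +
          sptEuc lB k₁ k₂ k₃ lam g₁ (magEucMul lB g₂ g₃) g₄ -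
          sptEuc lB k₁ k₂ k₃ lam g₁ g₂ (magEucMul lB g₃ g₄) +
          sptEuc lB k₁ k₂ k₃ lam g₁ g₂ g₃ =
        (k₁ : ℝ) * cOne lB g₁ g₂ * cOne lB g₃ g₄ + (k₂ : ℝ) * cTwo lB g₁ g₂ * cOne lB g₃ g₄ +
          (k₃ : ℝ) * cTwo lB g₁ g₂ * cTwo lB g₃ g₄) ∧
    (∀ g₁ g₂ g₃ g₄ : MagEuc, ∃ N : ℤ,
      (k₁ : ℝ) * cOne lB g₁ g₂ * cOne lB g₃ g₄ + (k₂ : ℝ) * cTwo lB g₁ g₂ * cOne lB g₃ g₄ +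
        (k₃ : ℝ) * cTwo lB g₁ g₂ * cTwo lB g₃ g₄ = N) ∧
    (∀ g₁ g₂ g₃ g₄ : MagEuc,
      (↑(sptEuc lB k₁ k₂ k₃ lam g₂ g₃ g₄) : AddCircle (1 : ℝ)) -
          ↑(sptEuc lB k₁ k₂ k₃ lam (magEucMul lB g₁ g₂) g₃ g₄) +
          ↑(sptEuc lB k₁ k₂ k₃ lam g₁ (magEucMul lB g₂ g₃) g₄) -
          ↑(sptEuc lB k₁ k₂ k₃ lam g₁ g₂ (magEucMul lB g₃ g₄)) +
          ↑(sptEuc lB k₁ k₂ k₃ lam g₁ g₂ g₃) = 0) :=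
  continuum_spt_cocycles_general lB k₁ k₂ k₃ lam hlam
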